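/- arXiv:math/9710216 — 2 statements merged into one kernel-verified Lean document; each statement's English description precedes it below -/
import Mathlib

section
/- If κ ∈ K and p ≤^{apr}_κ q₁ ≤ r and p ≤^{apr}_κ q₂ ≤ r, then q₁ ∪ q₂ ∈ Q and q_i ≤^{apr}_κ q₁ ∪ q₂ for i = 1, 2. -/
open Cardinal Set

noncomputable section

attribute [local instance] Classical.propDecidable

/-- A forcing condition: a partial `{0,1}`-valued function on ordinals,
coded as an `Option Bool`-valued function. -/
abbrev Cond : Type 1 := Ordinal → Option Bool

/-- The domain of a condition. -/
def cdom (q : Cond) : Set Ordinal := {i | (q i).isSome}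

/-- The `E_κ`-equivalence class of `i` : `j E_κ i` iff `j + κ = i + κ` (ordinal addition). -/
def Ecl (κ : Cardinal) (i : Ordinal) : Set Ordinal := {j | j + κ.ord = i + κ.ord}

/-- The `E_{<κ}`-class of `i`, where `E_{<κ} = id ∪ ⋃ {E_θ : θ ∈ K ∩ κ}`. -/
def EclLt (K : Set Cardinal) (κ : Cardinal) (i : Ordinal) : Set Ordinal :=
  {i} ∪ ⋃ θ ∈ K ∩ Set.Iio κ, Ecl θ i

/-- `θ_κ` : the least regular cardinal `≥ sup((K ∩ κ) ∪ {λ})`. -/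
def theta (lam : Cardinal) (K : Set Cardinal) (κ : Cardinal) : Cardinal :=
  sInf {θ : Cardinal | θ.IsRegular ∧ sSup ((K ∩ Set.Iio κ) ∪ {lam}) ≤ θ}

/-- `A` grows from `X` to `Y` : `∅ ≠ A ∩ X ≠ A ∩ Y`. -/
def grows (A X Y : Set Ordinal) : Prop := (A ∩ X).Nonempty ∧ A ∩ X ≠ A ∩ Y

/-- Membership in the forcing `Q = Q_K`. -/
def inQ (lam mu : Cardinal) (K : Set Cardinal) (q : Cond) : Prop :=
  cdom q ⊆ Set.Iio mu.ord ∧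
    ∀ i < mu.ord, ∀ κ ∈ K, #↥(Ecl κ i ∩ cdom q) < Cardinal.lift.{1} (theta lam K κ)

/-- The set of `E_κ`-classes which grow from `X` to `Y`. -/
def growClasses (mu : Cardinal) (κ : Cardinal) (X Y : Set Ordinal) : Set (Set Ordinal) :=
  {A | (∃ i < mu.ord, A = Ecl κ i) ∧ grows A X Y}

/-- The forcing order: `p ⊆ q` and for each `κ ∈ K`, fewer than `θ_κ` many
`E_κ`-classes grow from `dom p` to `dom q`. -/
def condLe (lam mu : Cardinal) (K : Set Cardinal) (p q : Cond) : Prop :=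
  (∀ i b, p i = some b → q i = some b) ∧
    ∀ κ ∈ K, #↥(growClasses mu κ (cdom p) (cdom q)) < Cardinal.lift.{1} (theta lam K κ)

/-- Pure extension at `κ`: no `E_κ`-class represented in `dom p` grows. -/
def condLePr (lam mu : Cardinal) (K : Set Cardinal) (κ : Cardinal) (p q : Cond) : Prop :=
  condLe lam mu K p q ∧ ∀ i : Ordinal, ¬ grows (Ecl κ i) (cdom p) (cdom q)

/-- Apure extension at `κ`: no new `E_κ`-classes are represented in `dom q`. -/
def condLeApr (lam mu : Cardinal) (K : Set Cardinal) (κ : Cardinal) (p q : Cond) : Prop :=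
  condLe lam mu K p q ∧ ∀ i ∈ cdom q, (Ecl κ i ∩ cdom p).Nonempty

/-- Union of two conditions (as partial functions, left priority). -/
def unionC (p q : Cond) : Cond := fun i => (p i).orElse (fun _ => q i)

/-- Restriction of a condition to a set of ordinals. -/
def restrictC (q : Cond) (X : Set Ordinal) : Cond := fun ξ => if ξ ∈ X then q ξ else none

/-- Union of a family of conditions indexed by ordinals below `θo`. -/
def unionFam (f : Ordinal → Cond) (θo : Ordinal) : Cond :=
  fun ξ => if h : ∃ i, i < θo ∧ (f i ξ).isSome then f h.choose ξ else none

/-- Compatibility in `Q`: existence of a common upper bound in `Q`. -/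
def compatQ (lam mu : Cardinal) (K : Set Cardinal) (q₁ q₂ : Cond) : Prop :=
  ∃ r : Cond, inQ lam mu K r ∧ condLe lam mu K q₁ r ∧ condLe lam mu K q₂ r

/-- Standing ground-model hypotheses: `λ = λ^{<λ}` regular, `μ = μ^λ` regular,
`K ⊆ [λ, μ]` a set of regular cardinals with `λ, μ ∈ K`. -/
def GroundCtx (lam mu : Cardinal) (K : Set Cardinal) : Prop :=
  lam.IsRegular ∧ lam ^< lam = lam ∧ mu.IsRegular ∧ mu ^ lam = mu ∧
    (∀ κ ∈ K, κ.IsRegular ∧ lam ≤ κ ∧ κ ≤ mu) ∧ lam ∈ K ∧ mu ∈ K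


lemma theta_regular (lam : Cardinal) (K : Set Cardinal) (κ : Cardinal) :
    (theta lam K κ).IsRegular := by
  have hne : {θ : Cardinal | θ.IsRegular ∧ sSup ((K ∩ Set.Iio κ) ∪ {lam}) ≤ θ}.Nonempty :=
    ⟨Order.succ (ℵ₀ ⊔ sSup ((K ∩ Set.Iio κ) ∪ {lam})),
      Cardinal.isRegular_succ le_sup_left,
      le_trans le_sup_right (le_of_lt (Order.lt_succ _))⟩
  exact (csInf_mem hne).1

lemma cdom_unionC (p q : Cond) : cdom (unionC p q) = cdom p ∪ cdom q := by
  ext i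
  simp only [cdom, unionC, Set.mem_setOf_eq, Set.mem_union]
  cases h : p i <;> simp [h, Option.orElse]

lemma mem_cdom_of_le {lam mu : Cardinal} {K : Set Cardinal} {p q : Cond}
    (h : condLe lam mu K p q) : cdom p ⊆ cdom q := by
  intro i hi
  rcases Option.isSome_iff_exists.mp hi with ⟨b, hb⟩
  exact Option.isSome_iff_exists.mpr ⟨b, h.1 i b hb⟩

/-- if `p ≤apr_κ q₁ ≤ r` and `p ≤apr_κ q₂ ≤ r`, then `q₁ ∪ q₂ ∈ Q`
and `qᵢ ≤apr_κ q₁ ∪ q₂` for `i = 1, 2`. -/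
theorem stmt11 (lam mu : Cardinal) (K : Set Cardinal) (hctx : GroundCtx lam mu K)
    (κ : Cardinal) (hκ : κ ∈ K) (p q₁ q₂ r : Cond)
    (hp : inQ lam mu K p) (hq₁ : inQ lam mu K q₁) (hq₂ : inQ lam mu K q₂)
    (hr : inQ lam mu K r)
    (h1 : condLeApr lam mu K κ p q₁) (h1r : condLe lam mu K q₁ r)
    (h2 : condLeApr lam mu K κ p q₂) (h2r : condLe lam mu K q₂ r) :
    inQ lam mu K (unionC q₁ q₂) ∧
      condLeApr lam mu K κ q₁ (unionC q₁ q₂) ∧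
      condLeApr lam mu K κ q₂ (unionC q₁ q₂) := by
  obtain ⟨h1le, h1apr⟩ := h1
  obtain ⟨h2le, h2apr⟩ := h2
  have hq1r : ∀ i b, q₁ i = some b → r i = some b := h1r.1
  have hq2r : ∀ i b, q₂ i = some b → r i = some b := h2r.1
  have hle2fun : ∀ i b, q₂ i = some b → unionC q₁ q₂ i = some b := by
    intro i b hb
    unfold unionC
    cases hq : q₁ i with
    | none => simp [hq, hb, Option.orElse]
    | some b' =>
        have := (hq1r i b' hq).symm.trans (hq2r i b hb)
        simp [hq, Option.orElse, Option.some_inj.mp this]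
  have hle1fun : ∀ i b, q₁ i = some b → unionC q₁ q₂ i = some b := by
    intro i b hb; simp [unionC, hb, Option.orElse]
  have hcd : cdom (unionC q₁ q₂) = cdom q₁ ∪ cdom q₂ := cdom_unionC q₁ q₂
  have hsub1 : cdom q₁ ⊆ cdom (unionC q₁ q₂) := by rw [hcd]; exact Set.subset_union_left
  have hsub2 : cdom q₂ ⊆ cdom (unionC q₁ q₂) := by rw [hcd]; exact Set.subset_union_right
  have hsubr : cdom (unionC q₁ q₂) ⊆ cdom r := by
    rw [hcd]
    exact Set.union_subset (mem_cdom_of_le h1r) (mem_cdom_of_le h2r)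
  have hp1 : cdom p ⊆ cdom q₁ := mem_cdom_of_le h1le
  have hp2 : cdom p ⊆ cdom q₂ := mem_cdom_of_le h2le
  have haleph : ∀ κ' : Cardinal, (ℵ₀ : Cardinal.{1}) ≤ Cardinal.lift.{1} (theta lam K κ') := by
    intro κ'
    exact Cardinal.aleph0_le_lift.mpr (theta_regular lam K κ').aleph0_le
  have hgrowsub : ∀ (q : Cond), cdom q ⊆ cdom (unionC q₁ q₂) → ∀ κ' : Cardinal,
      growClasses mu κ' (cdom q) (cdom (unionC q₁ q₂)) ⊆ growClasses mu κ' (cdom q) (cdom r) := by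
    intro q hq κ' A hA
    obtain ⟨hex, hne, hgr⟩ := hA
    refine ⟨hex, hne, ?_⟩
    intro hEq
    apply hgr
    apply Set.Subset.antisymm
    · exact Set.inter_subset_inter_right _ hq
    · rw [hEq]; exact Set.inter_subset_inter_right _ hsubr
  have hinQ : inQ lam mu K (unionC q₁ q₂) := by
    constructor
    · rw [hcd]; exact Set.union_subset hq₁.1 hq₂.1
    · intro i hi κ' hκ'
      rw [hcd, Set.inter_union_distrib_left]
      calc #↥(Ecl κ' i ∩ cdom q₁ ∪ Ecl κ' i ∩ cdom q₂)
          ≤ #↥(Ecl κ' i ∩ cdom q₁) + #↥(Ecl κ' i ∩ cdom q₂) := Cardinal.mk_union_le _ _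
        _ < Cardinal.lift.{1} (theta lam K κ') :=
            Cardinal.add_lt_of_lt (haleph κ') (hq₁.2 i hi κ' hκ') (hq₂.2 i hi κ' hκ')
  have hle1 : condLe lam mu K q₁ (unionC q₁ q₂) := by
    refine ⟨hle1fun, ?_⟩
    intro κ' hκ'
    exact lt_of_le_of_lt (Cardinal.mk_le_mk_of_subset (hgrowsub q₁ hsub1 κ')) (h1r.2 κ' hκ')
  have hle2 : condLe lam mu K q₂ (unionC q₁ q₂) := by
    refine ⟨hle2fun, ?_⟩
    intro κ' hκ'
    exact lt_of_le_of_lt (Cardinal.mk_le_mk_of_subset (hgrowsub q₂ hsub2 κ')) (h2r.2 κ' hκ')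
  have hapr1 : ∀ i ∈ cdom (unionC q₁ q₂), (Ecl κ i ∩ cdom q₁).Nonempty := by
    intro i hi
    rcases (by rwa [hcd] at hi : i ∈ cdom q₁ ∪ cdom q₂) with h | h
    · exact ⟨i, rfl, h⟩
    · rcases h2apr i h with ⟨j, hj1, hj2⟩
      exact ⟨j, hj1, hp1 hj2⟩
  have hapr2 : ∀ i ∈ cdom (unionC q₁ q₂), (Ecl κ i ∩ cdom q₂).Nonempty := by
    intro i hi
    rcases (by rwa [hcd] at hi : i ∈ cdom q₁ ∪ cdom q₂) with h | h
    · rcases h1apr i h with ⟨j, hj1, hj2⟩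
      exact ⟨j, hj1, hp2 hj2⟩
    · exact ⟨i, rfl, h⟩
  exact ⟨hinQ, ⟨hle1, hapr1⟩, ⟨hle2, hapr2⟩⟩
end
end

section
/- For every κ ∈ K, the partial order (Q, ≤^{pr}_κ) is κ-complete: every ≤^{pr}_κ-increasing sequence (q_i : i < θ) of length θ < κ (θ regular) has a least upper bound, namely its union ⋃{q_i : i < θ}, which lies in Q and satisfies q_i ≤^{pr}_κ ⋃ q_j for all i < θ. -/
open Cardinal Set

noncomputable section

attribute [local instance] Classical.propDecidable

/-! A `≤pr_κ`-chain `⟨q_i : i < θ⟩` and its union `u` are compared one `E_τ`-class at a time.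
For `τ ≤ κ` every `E_τ`-class lies inside an `E_κ`-class (since `τ + κ = κ` for the initial
ordinals), and a pure extension freezes each `E_κ`-class it meets; hence no such class grows
along the chain or up to `u`, and a class meeting `dom q_j` meets `dom u` in `dom q_j` only.
For `τ > κ` we have `θ < κ ≤ θ_τ`, and each required bound is a union of `θ` sets of size
`< θ_τ`, which stays below `θ_τ` by regularity. -/

lemma mem_cdom {q : Cond} {ξ : Ordinal} : ξ ∈ cdom q ↔ ∃ b, q ξ = some b :=
  Option.isSome_iff_exists

lemma cdom_subset_of_extends {p q : Cond} (h : ∀ ξ b, p ξ = some b → q ξ = some b) :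
    cdom p ⊆ cdom q := fun _ hξ =>
  let ⟨b, hb⟩ := mem_cdom.1 hξ
  mem_cdom.2 ⟨b, h _ b hb⟩

lemma grows_iff_of_subset {A X Y : Set Ordinal} (hXY : X ⊆ Y) :
    grows A X Y ↔ (A ∩ X).Nonempty ∧ (A ∩ (Y \ X)).Nonempty := by
  refine and_congr_right fun _ => ⟨fun hne => ?_, ?_⟩
  · obtain ⟨y, ⟨hyA, hyY⟩, hyX⟩ :=
      Set.exists_of_ssubset ((Set.inter_subset_inter_right A hXY).ssubset_of_ne hne)
    exact ⟨y, hyA, hyY, fun hy => hyX ⟨hyA, hy⟩⟩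
  · rintro ⟨y, hyA, hyY, hyX⟩ heq
    exact hyX (heq ▸ ⟨hyA, hyY⟩ : y ∈ A ∩ X).2

lemma grows.mono {A B X Y : Set Ordinal} (h : grows A X Y) (hAB : A ⊆ B) (hXY : X ⊆ Y) :
    grows B X Y := by
  rw [grows_iff_of_subset hXY] at h ⊢
  exact ⟨h.1.mono (Set.inter_subset_inter_left _ hAB),
    h.2.mono (Set.inter_subset_inter_left _ hAB)⟩

lemma inter_eq_of_not_grows {A X Y : Set Ordinal} (hA : (A ∩ X).Nonempty)
    (h : ¬ grows A X Y) : A ∩ Y = A ∩ X :=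
  not_not.1 fun hne => h ⟨hA, Ne.symm hne⟩

section Directed

variable {ι : Type*} {X : ι → Set Ordinal} {A : Set Ordinal}

lemma exists_grows_of_grows_iUnion [SemilatticeSup ι] (hX : Monotone X) {i : ι}
    (h : grows A (X i) (⋃ j, X j)) : ∃ j, i ≤ j ∧ grows A (X i) (X j) := by
  obtain ⟨hA, y, hyA, hyU, hyX⟩ := (grows_iff_of_subset (Set.subset_iUnion X i)).1 h
  obtain ⟨j, hyj⟩ := Set.mem_iUnion.1 hyU
  refine ⟨i ⊔ j, le_sup_left, (grows_iff_of_subset (hX le_sup_left)).2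
    ⟨hA, y, hyA, hX le_sup_right hyj, hyX⟩⟩

lemma exists_grows_of_iUnion_grows {Y : Set Ordinal} (hXY : ⋃ j, X j ⊆ Y)
    (h : grows A (⋃ j, X j) Y) : ∃ j, grows A (X j) Y := by
  obtain ⟨⟨x, hxA, hxU⟩, y, hyA, hyY, hyU⟩ := (grows_iff_of_subset hXY).1 h
  obtain ⟨j, hxj⟩ := Set.mem_iUnion.1 hxU
  have hXjY : X j ⊆ Y := (Set.subset_iUnion X j).trans hXY
  exact ⟨j, (grows_iff_of_subset hXjY).2
    ⟨⟨x, hxA, hxj⟩, y, hyA, hyY, fun hyj => hyU (Set.mem_iUnion.2 ⟨j, hyj⟩)⟩⟩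

lemma growClasses_iUnion_right_subset [SemilatticeSup ι] (hX : Monotone X) (mu τ : Cardinal)
    (i : ι) : growClasses mu τ (X i) (⋃ j, X j) ⊆ ⋃ j, growClasses mu τ (X i) (X (i ⊔ j)) := by
  rintro _ ⟨hA, hg⟩
  obtain ⟨j, hij, hgj⟩ := exists_grows_of_grows_iUnion hX hg
  exact Set.mem_iUnion.2 ⟨j, hA, by rwa [sup_eq_right.2 hij]⟩

lemma growClasses_iUnion_left_subset {Y : Set Ordinal} (hXY : ⋃ j, X j ⊆ Y) (mu τ : Cardinal) :
    growClasses mu τ (⋃ j, X j) Y ⊆ ⋃ j, growClasses mu τ (X j) Y := by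
  rintro _ ⟨hA, hg⟩
  obtain ⟨j, hgj⟩ := exists_grows_of_iUnion_grows hXY hg
  exact Set.mem_iUnion.2 ⟨j, hA, hgj⟩

end Directed

lemma Ecl_subset_Ecl {τ κ : Cardinal} (hκ : ℵ₀ ≤ κ) (hτκ : τ ≤ κ) (i : Ordinal) :
    Ecl τ i ⊆ Ecl κ i := by
  rcases hτκ.eq_or_lt with rfl | hlt
  · exact subset_rfl
  intro j hj
  have habs : τ.ord + κ.ord = κ.ord :=
    Ordinal.isPrincipal_add_iff_add_left_eq_self.1 (Ordinal.isPrincipal_add_ord hκ) _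
      (Cardinal.ord_lt_ord.2 hlt)
  simp only [Ecl, Set.mem_ofPred_eq] at hj ⊢
  rw [← habs, ← add_assoc, ← add_assoc, hj]

lemma growClasses_eq_empty_of_le {mu τ κ : Cardinal} {X Y : Set Ordinal} (hκ : ℵ₀ ≤ κ)
    (hτκ : τ ≤ κ) (hXY : X ⊆ Y) (h : ∀ m, ¬ grows (Ecl κ m) X Y) : growClasses mu τ X Y = ∅ :=
  Set.eq_empty_of_forall_notMem fun _ ⟨⟨m, _, hA⟩, hg⟩ =>
    h m (hA ▸ hg |>.mono (Ecl_subset_Ecl hκ hτκ m) hXY)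

lemma theta_spec (lam : Cardinal) (K : Set Cardinal) (κ : Cardinal) :
    (theta lam K κ).IsRegular ∧ sSup ((K ∩ Set.Iio κ) ∪ {lam}) ≤ theta lam K κ := by
  have h : Order.succ (max (sSup ((K ∩ Set.Iio κ) ∪ {lam})) ℵ₀) ∈
      {θ : Cardinal | θ.IsRegular ∧ sSup ((K ∩ Set.Iio κ) ∪ {lam}) ≤ θ} :=
    ⟨Cardinal.isRegular_succ (le_max_right _ _), (le_max_left _ _).trans (Order.le_succ _)⟩
  exact csInf_mem ⟨_, h⟩

lemma le_theta_of_mem {lam κ τ : Cardinal} {K : Set Cardinal} (hK : BddAbove K) (hκ : κ ∈ K)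
    (hκτ : κ < τ) : κ ≤ theta lam K τ :=
  (le_csSup ((hK.mono Set.inter_subset_left).union bddAbove_singleton) (Or.inl ⟨hκ, hκτ⟩)).trans
    (theta_spec lam K τ).2

lemma zero_lt_lift_theta (lam : Cardinal) (K : Set Cardinal) (τ : Cardinal) :
    0 < Cardinal.lift.{1} (theta lam K τ) :=
  (theta_spec lam K τ).1.lift.pos

universe u

lemma Cardinal.mk_lt_of_subset_iUnion {α ι : Type u} {ρ : Cardinal.{u}} (hρ : ρ.IsRegular)
    (hι : #ι < ρ) {s : ι → Set α} (hs : ∀ i, #(s i) < ρ) {T : Set α} (hT : T ⊆ ⋃ i, s i) :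
    #T < ρ :=
  (Cardinal.mk_le_mk_of_subset hT).trans_lt
    ((Cardinal.card_iUnion_lt_iff_forall_of_isRegular hρ hι).2 hs)

section IsUnion

variable {ι : Type*} {g : ι → Cond} {u : Cond}

def IsUnion (g : ι → Cond) (u : Cond) : Prop :=
  (∀ j ξ b, g j ξ = some b → u ξ = some b) ∧ ∀ ξ b, u ξ = some b → ∃ j, g j ξ = some b

lemma IsUnion.cdom_eq (hu : IsUnion g u) : cdom u = ⋃ j, cdom (g j) := by
  refine Set.Subset.antisymm (fun ξ hξ => ?_)
    (Set.iUnion_subset fun j => cdom_subset_of_extends (hu.1 j))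
  obtain ⟨b, hb⟩ := mem_cdom.1 hξ
  obtain ⟨j, hj⟩ := hu.2 ξ b hb
  exact Set.mem_iUnion.2 ⟨j, mem_cdom.2 ⟨b, hj⟩⟩

/-- `unionFam` reads each value off an arbitrarily chosen index; along a chain of extensions
every index defined there gives the same value. -/
lemma isUnion_unionFam {f : Ordinal → Cond} {θo : Ordinal}
    (hf : ∀ i j, i ≤ j → j < θo → ∀ ξ b, f i ξ = some b → f j ξ = some b) :
    IsUnion (fun j : Set.Iio θo => f j) (unionFam f θo) := by
  refine ⟨?_, fun ξ b hb => ?_⟩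
  · rintro ⟨j, hj⟩ ξ b (hb : f j ξ = some b)
    have hex : ∃ i, i < θo ∧ (f i ξ).isSome := ⟨j, hj, by simp [hb]⟩
    obtain ⟨hi, b', hb'⟩ := And.imp_right Option.isSome_iff_exists.1 hex.choose_spec
    rw [unionFam, dif_pos hex, hb']
    rcases le_total j hex.choose with h | h
    · rw [← hb', hf j _ h hi ξ b hb]
    · rw [← hb, hf _ j h hj ξ b' hb']
  · rw [unionFam] at hb
    split_ifs at hb with hex
    exact ⟨⟨hex.choose, hex.choose_spec.1⟩, hb⟩

lemma IsUnion.cdom_subset (hu : IsUnion g u) (i : ι) : cdom (g i) ⊆ cdom u :=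
  cdom_subset_of_extends (hu.1 i)

lemma IsUnion.extends {r : Cond} (hu : IsUnion g u)
    (hr : ∀ j ξ b, g j ξ = some b → r ξ = some b) : ∀ ξ b, u ξ = some b → r ξ = some b :=
  fun ξ b hb => let ⟨j, hj⟩ := hu.2 ξ b hb; hr j ξ b hj

end IsUnion

section ChainUnion

variable {lam mu κ : Cardinal} {K : Set Cardinal}

lemma condLePr_of_not_grows {p q : Cond} (hκ : ℵ₀ ≤ κ)
    (hpq : ∀ ξ b, p ξ = some b → q ξ = some b) (hpure : ∀ m, ¬ grows (Ecl κ m) (cdom p) (cdom q))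
    (hlarge : ∀ τ ∈ K, κ < τ →
      #(growClasses mu τ (cdom p) (cdom q)) < Cardinal.lift.{1} (theta lam K τ)) :
    condLePr lam mu K κ p q := by
  refine ⟨⟨hpq, fun τ hτ => ?_⟩, hpure⟩
  rcases le_or_gt τ κ with hτκ | hκτ
  · rw [growClasses_eq_empty_of_le hκ hτκ (cdom_subset_of_extends hpq) hpure, Cardinal.mk_eq_zero]
    exact zero_lt_lift_theta lam K τ
  · exact hlarge τ hτ hκτ

variable {ι : Type 1} {g : ι → Cond} {u : Cond}

lemma monotone_cdom_of_condLePr [Preorder ι]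
    (hg : ∀ i j, i ≤ j → condLePr lam mu K κ (g i) (g j)) : Monotone fun i => cdom (g i) :=
  fun i j hij => cdom_subset_of_extends (hg i j hij).1.1

lemma IsUnion.not_grows [SemilatticeSup ι] (hu : IsUnion g u)
    (hg : ∀ i j, i ≤ j → condLePr lam mu K κ (g i) (g j)) (i : ι)
    (m : Ordinal) : ¬ grows (Ecl κ m) (cdom (g i)) (cdom u) := by
  rw [hu.cdom_eq]
  intro hgrow
  obtain ⟨j, hij, hgj⟩ := exists_grows_of_grows_iUnion (monotone_cdom_of_condLePr hg) hgrow
  exact (hg i j hij).2 m hgj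

lemma IsUnion.inQ [SemilatticeSup ι] (hu : IsUnion g u) (hκ : ℵ₀ ≤ κ)
    (hι : ∀ τ ∈ K, κ < τ → #ι < Cardinal.lift.{1} (theta lam K τ))
    (hgQ : ∀ i, inQ lam mu K (g i)) (hg : ∀ i j, i ≤ j → condLePr lam mu K κ (g i) (g j)) :
    inQ lam mu K u := by
  refine ⟨hu.cdom_eq ▸ Set.iUnion_subset fun i => (hgQ i).1, fun m hm τ hτ => ?_⟩
  rcases le_or_gt τ κ with hτκ | hκτ
  · by_cases hmeets : ∃ j, (Ecl τ m ∩ cdom (g j)).Nonempty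
    · obtain ⟨j, hj⟩ := hmeets
      rw [inter_eq_of_not_grows hj fun h => hu.not_grows hg j m
        (h.mono (Ecl_subset_Ecl hκ hτκ m) (hu.cdom_subset j))]
      exact (hgQ j).2 m hm τ hτ
    · rw [hu.cdom_eq, Set.inter_iUnion, Set.iUnion_eq_empty.2 fun j =>
        Set.not_nonempty_iff_eq_empty.1 fun h => hmeets ⟨j, h⟩, Cardinal.mk_eq_zero]
      exact zero_lt_lift_theta lam K τ
  · rw [hu.cdom_eq, Set.inter_iUnion]
    exact Cardinal.mk_lt_of_subset_iUnion (theta_spec lam K τ).1.lift (hι τ hτ hκτ)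
      (fun j => (hgQ j).2 m hm τ hτ) subset_rfl

lemma IsUnion.condLePr_union [SemilatticeSup ι] (hu : IsUnion g u) (hκ : ℵ₀ ≤ κ)
    (hι : ∀ τ ∈ K, κ < τ → #ι < Cardinal.lift.{1} (theta lam K τ))
    (hg : ∀ i j, i ≤ j → condLePr lam mu K κ (g i) (g j)) (i : ι) :
    condLePr lam mu K κ (g i) u := by
  refine condLePr_of_not_grows hκ (hu.1 i) (hu.not_grows hg i) fun τ hτ hκτ => ?_
  rw [hu.cdom_eq]
  exact Cardinal.mk_lt_of_subset_iUnion (theta_spec lam K τ).1.lift (hι τ hτ hκτ)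
    (fun j => (hg i (i ⊔ j) le_sup_left).1.2 τ hτ)
    (growClasses_iUnion_right_subset (monotone_cdom_of_condLePr hg) mu τ i)

lemma IsUnion.union_condLePr (hu : IsUnion g u) (hκ : ℵ₀ ≤ κ)
    (hι : ∀ τ ∈ K, κ < τ → #ι < Cardinal.lift.{1} (theta lam K τ))
    {r : Cond} (hr : ∀ i, condLePr lam mu K κ (g i) r) : condLePr lam mu K κ u r := by
  have hur : ∀ ξ b, u ξ = some b → r ξ = some b := hu.extends fun j => (hr j).1.1
  have hUr : ⋃ j, cdom (g j) ⊆ cdom r := hu.cdom_eq ▸ cdom_subset_of_extends hur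
  refine condLePr_of_not_grows hκ hur (fun m hgrow => ?_) fun τ hτ hκτ => ?_
  · rw [hu.cdom_eq] at hgrow
    obtain ⟨j, hgj⟩ := exists_grows_of_iUnion_grows hUr hgrow
    exact (hr j).2 m hgj
  · rw [hu.cdom_eq]
    exact Cardinal.mk_lt_of_subset_iUnion (theta_spec lam K τ).1.lift (hι τ hτ hκτ)
      (fun j => (hr j).1.2 τ hτ) (growClasses_iUnion_left_subset hUr mu τ)

end ChainUnion

theorem stmt12_general (lam mu : Cardinal) (K : Set Cardinal) (hctx : GroundCtx lam mu K)
    (κ : Cardinal) (hκ : κ ∈ K) (θ : Cardinal) (hθκ : θ < κ)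
    (f : Ordinal → Cond) (hfQ : ∀ i < θ.ord, inQ lam mu K (f i))
    (hmono : ∀ i j : Ordinal, i ≤ j → j < θ.ord → condLePr lam mu K κ (f i) (f j)) :
    inQ lam mu K (unionFam f θ.ord) ∧
      (∀ i < θ.ord, condLePr lam mu K κ (f i) (unionFam f θ.ord)) ∧
      ∀ r, inQ lam mu K r → (∀ i < θ.ord, condLePr lam mu K κ (f i) r) →
        condLePr lam mu K κ (unionFam f θ.ord) r := by
  obtain ⟨-, -, -, -, hKreg, -, -⟩ := hctx
  have hκω : ℵ₀ ≤ κ := (hKreg κ hκ).1.aleph0_le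
  have hθ : ∀ τ ∈ K, κ < τ → #(Set.Iio θ.ord) < Cardinal.lift.{1} (theta lam K τ) := by
    intro τ hτ hκτ
    rw [Cardinal.mk_Iio_ordinal, Cardinal.card_ord, Cardinal.lift_lt]
    exact hθκ.trans_le (le_theta_of_mem ⟨mu, fun c hc => (hKreg c hc).2.2⟩ hκ hκτ)
  have hchain : ∀ i j : Set.Iio θ.ord, i ≤ j → condLePr lam mu K κ (f i) (f j) :=
    fun i j hij => hmono i j hij j.2
  have hu := isUnion_unionFam fun i j hij hj => (hmono i j hij hj).1.1
  exact ⟨hu.inQ hκω hθ (fun i => hfQ i i.2) hchain,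
    fun i hi => hu.condLePr_union hκω hθ hchain ⟨i, hi⟩,
    fun r _ hr => hu.union_condLePr hκω hθ fun i => hr i i.2⟩

/-- `(Q, ≤pr_κ)` is `κ`-complete: every `≤pr_κ`-increasing sequence of
regular length `θ < κ` has its union in `Q` as its `≤pr_κ`-least upper bound. -/
theorem stmt12 (lam mu : Cardinal) (K : Set Cardinal) (hctx : GroundCtx lam mu K)
    (κ : Cardinal) (hκ : κ ∈ K) (θ : Cardinal) (hθreg : θ.IsRegular) (hθκ : θ < κ)
    (f : Ordinal → Cond) (hfQ : ∀ i < θ.ord, inQ lam mu K (f i))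
    (hmono : ∀ i j : Ordinal, i ≤ j → j < θ.ord → condLePr lam mu K κ (f i) (f j)) :
    inQ lam mu K (unionFam f θ.ord) ∧
      (∀ i < θ.ord, condLePr lam mu K κ (f i) (unionFam f θ.ord)) ∧
      ∀ r, inQ lam mu K r → (∀ i < θ.ord, condLePr lam mu K κ (f i) r) →
        condLePr lam mu K κ (unionFam f θ.ord) r :=
  stmt12_general lam mu K hctx κ hκ θ hθκ f hfQ hmono
end
end
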